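/- arXiv:1004.5307 — 2 statements merged into one kernel-verified Lean document; each statement's English description precedes it below -/
import Mathlib

section
/- Let s ∈ (0,1], p ∈ (n/s, ∞), and u ∈ L¹_loc(ℝⁿ) with an s-Hajłasz gradient g ∈ L^p(ℝⁿ). Then for every x ∈ ℝⁿ and r > 0, the telescoping estimate |u_{B(x,r)} − u_{B(x,r/2)}| ≤ C(n) r^s · (⨍_{B(x,r)} g^{p} dz)^{1/p} · |B(x,r)|^{0} holds, and summing over dyadic scales, for any Lebesgue point x of u: |u(x) − u_{B(x,r)}| ≤ C(n,s,p) r^{s − n/p} (∫_{B(x,r)} g(z)^p dz)^{1/p}, where u_B denotes the average of u over B. -/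
open MeasureTheory Metric Set Filter


private lemma avg_holder {α : Type*} [MeasurableSpace α] {μ : Measure α} [IsFiniteMeasure μ]
    (hμ : μ ≠ 0) {p : ℝ} (hp : 1 < p) {g : α → ℝ} (hg0 : ∀ x, 0 ≤ g x)
    (hg : MemLp g (ENNReal.ofReal p) μ) :
    ⨍ x, g x ∂μ ≤ (⨍ x, g x ^ p ∂μ) ^ (1 / p) := by
  have hpq := Real.HolderConjugate.conjExponent hp
  set q := Real.conjExponent p with hqdef
  have hM : 0 < (μ Set.univ).toReal :=
    ENNReal.toReal_pos (by simpa [Measure.measure_univ_ne_zero] using hμ) (measure_ne_top μ _)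
  set M := (μ Set.univ).toReal with hMdef
  have hI : 0 ≤ ∫ x, g x ^ p ∂μ := integral_nonneg fun x => Real.rpow_nonneg (hg0 x) p
  have h1 : ∫ x, g x * 1 ∂μ ≤
      (∫ x, g x ^ p ∂μ) ^ (1 / p) * (∫ x, (1 : ℝ) ^ q ∂μ) ^ (1 / q) :=
    integral_mul_le_Lp_mul_Lq_of_nonneg hpq (Eventually.of_forall hg0)
      (Eventually.of_forall fun _ => zero_le_one) hg (memLp_const 1)
  simp only [mul_one, Real.one_rpow, integral_const, smul_eq_mul] at h1
  rw [average_eq, average_eq, smul_eq_mul, smul_eq_mul]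
  have key : M⁻¹ * M ^ (1 / q) = M ^ (-(1 / p)) := by
    rw [← Real.rpow_neg_one M, ← Real.rpow_add hM]
    congr 1
    have h2 := hpq.inv_add_inv_eq_one
    rw [inv_eq_one_div, inv_eq_one_div] at h2
    linarith
  calc M⁻¹ * ∫ x, g x ∂μ
      ≤ M⁻¹ * ((∫ x, g x ^ p ∂μ) ^ (1 / p) * M ^ (1 / q)) :=
        mul_le_mul_of_nonneg_left h1 (inv_nonneg.2 hM.le)
    _ = (M⁻¹ * ∫ x, g x ^ p ∂μ) ^ (1 / p) := by
        rw [Real.mul_rpow (inv_nonneg.2 hM.le) hI, Real.inv_rpow hM.le,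
          ← Real.rpow_neg hM.le, ← key]
        ring

private lemma abs_int_le {α : Type*} [MeasurableSpace α] (μ : Measure α) (f : α → ℝ) :
    |∫ x, f x ∂μ| ≤ ∫ x, |f x| ∂μ := by
  simpa [Real.norm_eq_abs] using norm_integral_le_integral_norm (μ := μ) f

private lemma osc_bound {n : ℕ} (hn : 1 ≤ n) {s p : ℝ} (hs : 0 < s) (hs1 : s ≤ 1) (hp1 : 1 < p)
    {u g : EuclideanSpace ℝ (Fin n) → ℝ}
    (hu : LocallyIntegrable u volume) (hg0 : ∀ x, 0 ≤ g x)
    (hgp : MemLp g (ENNReal.ofReal p) volume)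
    {E : Set (EuclideanSpace ℝ (Fin n))} (hE0 : volume E = 0)
    (hE : ∀ x ∉ E, ∀ y ∉ E, |u x - u y| ≤ dist x y ^ s * (g x + g y))
    (x : EuclideanSpace ℝ (Fin n)) {r : ℝ} (hr : 0 < r) :
    |(⨍ z in ball x r, u z) - ⨍ z in ball x (r / 2), u z| ≤
      (2 * (1 + 2 ^ n)) * r ^ s * (⨍ z in ball x r, g z ^ p) ^ (1 / p) := by
  haveI : Nontrivial (EuclideanSpace ℝ (Fin n)) :=
    Module.nontrivial_of_finrank_pos (R := ℝ)
      (by rw [finrank_euclideanSpace_fin]; omega)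
  set B := ball x r with hB
  set B' := ball x (r / 2) with hB'
  have hB'B : B' ⊆ B := ball_subset_ball (by linarith)
  have hμB : 0 < (volume B).toReal :=
    ENNReal.toReal_pos (measure_ball_pos volume x hr).ne' measure_ball_lt_top.ne
  have hμB' : 0 < (volume B').toReal :=
    ENNReal.toReal_pos (measure_ball_pos volume x (half_pos hr)).ne' measure_ball_lt_top.ne
  haveI hfB : IsFiniteMeasure (volume.restrict B) :=
    ⟨by rw [Measure.restrict_apply_univ]; exact measure_ball_lt_top⟩
  haveI hfB' : IsFiniteMeasure (volume.restrict B') :=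
    ⟨by rw [Measure.restrict_apply_univ]; exact measure_ball_lt_top⟩
  have hu_int : IntegrableOn u B volume :=
    (hu.integrableOn_isCompact (isCompact_closedBall x r)).mono_set ball_subset_closedBall
  have hu_int' : IntegrableOn u B' volume := hu_int.mono_set hB'B
  have hg_int : IntegrableOn g B volume :=
    (hgp.restrict B).integrable (by rw [ENNReal.one_le_ofReal]; exact hp1.le)
  have hg_int' : IntegrableOn g B' volume := hg_int.mono_set hB'B
  have haeE : ∀ᵐ z ∂(volume : Measure (EuclideanSpace ℝ (Fin n))), z ∉ E :=
    measure_eq_zero_iff_ae_notMem.mp hE0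
  set A := ⨍ z in B, u z with hA
  set M := ⨍ z in B, g z with hM
  have hMval : M = ((volume B).toReal)⁻¹ * ∫ z in B, g z := by
    rw [hM, setAverage_eq, measureReal_def, smul_eq_mul]
  have hAval : A = ((volume B).toReal)⁻¹ * ∫ z in B, u z := by
    rw [hA, setAverage_eq, measureReal_def, smul_eq_mul]
  have hM0 : 0 ≤ M := by
    rw [hMval]
    exact mul_nonneg (inv_nonneg.2 hμB.le) (integral_nonneg fun z => hg0 z)
  have h2r : (0:ℝ) < 2 * r := by linarith
  -- Step A : pointwise bound for y in B off E
  have stepA : ∀ y ∈ B, y ∉ E → |u y - A| ≤ (2*r) ^ s * (g y + M) := by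
    intro y hyB hyE
    have hUB : ∀ᵐ z ∂volume.restrict B, |u y - u z| ≤ (2*r) ^ s * (g y + g z) := by
      filter_upwards [ae_restrict_mem measurableSet_ball, ae_restrict_of_ae haeE] with z hzB hzE
      have hd : dist y z ≤ 2 * r := by
        have h1 : dist y x < r := mem_ball.mp hyB
        have h2 : dist x z < r := by rw [dist_comm]; exact mem_ball.mp hzB
        calc dist y z ≤ dist y x + dist x z := dist_triangle y x z
          _ ≤ 2 * r := by linarith
      refine (hE y hyE z hzE).trans ?_
      exact mul_le_mul_of_nonneg_right (Real.rpow_le_rpow dist_nonneg hd hs.le)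
        (add_nonneg (hg0 y) (hg0 z))
    have int1 : Integrable (fun z => |u y - u z|) (volume.restrict B) :=
      ((integrable_const (u y)).sub hu_int).abs
    have int2 : Integrable (fun z => (2*r) ^ s * (g y + g z)) (volume.restrict B) :=
      (((integrable_const (g y)).add hg_int).const_mul _)
    have h3 : ∫ z in B, |u y - u z| ≤ ∫ z in B, (2*r) ^ s * (g y + g z) :=
      integral_mono_ae int1 int2 hUB
    have h4 : ∫ z in B, (2*r) ^ s * (g y + g z) =
        (2*r) ^ s * ((volume B).toReal * g y + ∫ z in B, g z) := by
      rw [integral_const_mul, integral_add (integrable_const _) hg_int, setIntegral_const,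
        measureReal_def, smul_eq_mul]
    have h5 : u y - A = ((volume B).toReal)⁻¹ * ∫ z in B, (u y - u z) := by
      rw [integral_sub (integrable_const _) hu_int, setIntegral_const, measureReal_def, smul_eq_mul, hAval]
      field_simp
    calc |u y - A| = ((volume B).toReal)⁻¹ * |∫ z in B, (u y - u z)| := by
          rw [h5, abs_mul, abs_of_nonneg (inv_nonneg.2 hμB.le)]
      _ ≤ ((volume B).toReal)⁻¹ * ∫ z in B, |u y - u z| :=
          mul_le_mul_of_nonneg_left (abs_int_le _ _) (inv_nonneg.2 hμB.le)
      _ ≤ ((volume B).toReal)⁻¹ * ((2*r) ^ s * ((volume B).toReal * g y + ∫ z in B, g z)) :=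
          mul_le_mul_of_nonneg_left (h3.trans h4.le) (inv_nonneg.2 hμB.le)
      _ = (2*r) ^ s * (g y + M) := by rw [hMval]; field_simp
  -- Step B : integrate over B'
  have hUB' : ∀ᵐ y ∂volume.restrict B', |u y - A| ≤ (2*r) ^ s * (g y + M) := by
    filter_upwards [ae_restrict_mem measurableSet_ball, ae_restrict_of_ae haeE] with y hyB' hyE
    exact stepA y (hB'B hyB') hyE
  have int1' : Integrable (fun y => |u y - A|) (volume.restrict B') :=
    (hu_int'.sub (integrable_const A)).abs
  have int2' : Integrable (fun y => (2*r) ^ s * (g y + M)) (volume.restrict B') :=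
    (((hg_int').add (integrable_const M)).const_mul _)
  have h3' : ∫ y in B', |u y - A| ≤ ∫ y in B', (2*r) ^ s * (g y + M) :=
    integral_mono_ae int1' int2' hUB'
  have h4' : ∫ y in B', (2*r) ^ s * (g y + M) =
      (2*r) ^ s * ((∫ y in B', g y) + (volume B').toReal * M) := by
    rw [integral_const_mul, integral_add hg_int' (integrable_const _), setIntegral_const,
      measureReal_def, smul_eq_mul]
  have h5' : (⨍ z in B', u z) - A = ((volume B').toReal)⁻¹ * ∫ y in B', (u y - A) := by
    rw [integral_sub hu_int' (integrable_const _), setIntegral_const, measureReal_def, smul_eq_mul,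
      setAverage_eq, measureReal_def, smul_eq_mul]
    field_simp
  have stepB : |(⨍ z in B', u z) - A| ≤ (2*r) ^ s * ((⨍ y in B', g y) + M) := by
    calc |(⨍ z in B', u z) - A|
        = ((volume B').toReal)⁻¹ * |∫ y in B', (u y - A)| := by
          rw [h5', abs_mul, abs_of_nonneg (inv_nonneg.2 hμB'.le)]
      _ ≤ ((volume B').toReal)⁻¹ * ∫ y in B', |u y - A| :=
          mul_le_mul_of_nonneg_left (abs_int_le _ _) (inv_nonneg.2 hμB'.le)
      _ ≤ ((volume B').toReal)⁻¹ *
            ((2*r) ^ s * ((∫ y in B', g y) + (volume B').toReal * M)) :=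
          mul_le_mul_of_nonneg_left (h3'.trans h4'.le) (inv_nonneg.2 hμB'.le)
      _ = (2*r) ^ s * ((⨍ y in B', g y) + M) := by
          rw [setAverage_eq, measureReal_def, smul_eq_mul]; field_simp
  -- volume comparison
  have hVB : (volume B).toReal =
      r ^ n * (volume (ball (0 : EuclideanSpace ℝ (Fin n)) 1)).toReal := by
    rw [hB, Measure.addHaar_ball volume x hr.le, ENNReal.toReal_mul,
      ENNReal.toReal_ofReal (pow_nonneg hr.le _), finrank_euclideanSpace_fin]
  have hVB' : (volume B').toReal =
      (r/2) ^ n * (volume (ball (0 : EuclideanSpace ℝ (Fin n)) 1)).toReal := by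
    rw [hB', Measure.addHaar_ball volume x (half_pos hr).le, ENNReal.toReal_mul,
      ENNReal.toReal_ofReal (pow_nonneg (half_pos hr).le _), finrank_euclideanSpace_fin]
  have hVrel : (volume B').toReal = (volume B).toReal / 2 ^ n := by
    rw [hVB, hVB', div_pow]; ring
  have hg'g : (⨍ y in B', g y) ≤ 2 ^ n * M := by
    have h1 : ∫ y in B', g y ≤ ∫ y in B, g y :=
      setIntegral_mono_set hg_int (ae_of_all _ fun z => hg0 z)
        (HasSubset.Subset.eventuallyLE hB'B)
    rw [setAverage_eq, measureReal_def, smul_eq_mul, hVrel, hMval]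
    rw [div_eq_mul_inv, mul_inv, inv_inv]
    calc ((volume B).toReal⁻¹ * 2 ^ n) * ∫ y in B', g y
        ≤ ((volume B).toReal⁻¹ * 2 ^ n) * ∫ y in B, g y := by
          apply mul_le_mul_of_nonneg_left h1
          positivity
      _ = 2 ^ n * ((volume B).toReal⁻¹ * ∫ y in B, g y) := by ring
  -- Jensen
  have hMH : M ≤ (⨍ z in B, g z ^ p) ^ (1/p) := by
    rw [hM]
    exact avg_holder (by
      rw [Ne, Measure.restrict_eq_zero]
      exact (measure_ball_pos volume x hr).ne') hp1 hg0 (hgp.restrict B)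
  have h2s : (2*r) ^ s ≤ 2 * r ^ s := by
    rw [Real.mul_rpow (by norm_num) hr.le]
    have : (2:ℝ) ^ s ≤ 2 ^ (1:ℝ) := Real.rpow_le_rpow_of_exponent_le one_le_two hs1
    rw [Real.rpow_one] at this
    exact mul_le_mul_of_nonneg_right this (Real.rpow_nonneg hr.le s)
  have havg0 : 0 ≤ (⨍ z in B, g z ^ p) ^ (1/p) :=
    Real.rpow_nonneg (by
      rw [setAverage_eq, smul_eq_mul]
      exact mul_nonneg (inv_nonneg.2 hμB.le)
        (integral_nonneg fun z => Real.rpow_nonneg (hg0 z) p)) _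
  calc |(⨍ z in B, u z) - ⨍ z in B', u z|
      = |(⨍ z in B', u z) - A| := by rw [hA, abs_sub_comm]
    _ ≤ (2*r) ^ s * ((⨍ y in B', g y) + M) := stepB
    _ ≤ (2*r) ^ s * (2 ^ n * M + M) := by
        apply mul_le_mul_of_nonneg_left (by linarith [hg'g]) (Real.rpow_nonneg h2r.le s)
    _ = (2*r) ^ s * ((1 + 2 ^ n) * M) := by ring
    _ ≤ (2 * r ^ s) * ((1 + 2 ^ n) * M) := by
        apply mul_le_mul_of_nonneg_right h2s
        positivity
    _ ≤ (2 * r ^ s) * ((1 + 2 ^ n) * (⨍ z in B, g z ^ p) ^ (1/p)) := by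
        apply mul_le_mul_of_nonneg_left _ (by positivity)
        exact mul_le_mul_of_nonneg_left hMH (by positivity)
    _ = (2 * (1 + 2 ^ n)) * r ^ s * (⨍ z in B, g z ^ p) ^ (1/p) := by ring
/-- Telescoping/Morrey estimates for a function `u` on `ℝⁿ` with an s-Hajłasz gradient
`g ∈ L^p`, `p > n/s`: the dyadic average difference bound and, at every Lebesgue
point `x`, the estimate `|u(x) − u_{B(x,r)}| ≤ C r^{s−n/p} (∫_{B(x,r)} g^p)^{1/p}`. -/
theorem hajlasz_telescoping_estimate {n : ℕ} (hn : 1 ≤ n) (s p : ℝ)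
    (hs : 0 < s) (hs1 : s ≤ 1) (hp : (n : ℝ) / s < p) :
    ∃ C : ℝ, 0 < C ∧
    ∀ u g : EuclideanSpace ℝ (Fin n) → ℝ,
      LocallyIntegrable u volume →
      (∀ x, 0 ≤ g x) → Measurable g →
      MemLp g (ENNReal.ofReal p) volume →
      (∃ E : Set (EuclideanSpace ℝ (Fin n)), volume E = 0 ∧
        ∀ x ∉ E, ∀ y ∉ E, |u x - u y| ≤ dist x y ^ s * (g x + g y)) →
      (∀ (x : EuclideanSpace ℝ (Fin n)) (r : ℝ), 0 < r →
        |(⨍ z in ball x r, u z) - ⨍ z in ball x (r / 2), u z| ≤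
          C * r ^ s * (⨍ z in ball x r, g z ^ p) ^ (1 / p)) ∧
      (∀ (x : EuclideanSpace ℝ (Fin n)) (r : ℝ), 0 < r →
        Tendsto (fun ρ => ⨍ z in ball x ρ, u z) (nhdsWithin 0 (Set.Ioi 0)) (nhds (u x)) →
        |u x - ⨍ z in ball x r, u z| ≤
          C * r ^ (s - n / p) * (∫ z in ball x r, g z ^ p) ^ (1 / p)) := by
  haveI : Nontrivial (EuclideanSpace ℝ (Fin n)) :=
    Module.nontrivial_of_finrank_pos (R := ℝ)
      (by rw [finrank_euclideanSpace_fin]; omega)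
  have hn' : (1:ℝ) ≤ (n:ℝ) := by exact_mod_cast hn
  have hp1 : 1 < p := lt_of_le_of_lt ((one_le_div hs).mpr (hs1.trans hn')) hp
  have hppos : 0 < p := lt_trans one_pos hp1
  have hδ : 0 < s - (n:ℝ) / p := by
    have h1 : (n:ℝ) < p * s := (div_lt_iff₀ hs).mp hp
    have h2 : (n:ℝ) / p < s := (div_lt_iff₀ hppos).mpr (by linarith [mul_comm p s])
    linarith
  set δ := s - (n:ℝ) / p with hδdef
  set c := (volume (ball (0 : EuclideanSpace ℝ (Fin n)) 1)).toReal with hc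
  have hc0 : 0 < c :=
    ENNReal.toReal_pos (measure_ball_pos volume _ one_pos).ne' measure_ball_lt_top.ne
  set C₁ : ℝ := 2 * (1 + 2 ^ n) with hC₁
  have hC₁0 : 0 < C₁ := by positivity
  set w : ℝ := (2:ℝ) ^ (-δ) with hw
  have hw0 : 0 < w := Real.rpow_pos_of_pos two_pos _
  have hw1 : w < 1 := Real.rpow_lt_one_of_one_lt_of_neg one_lt_two (by linarith)
  set C₂ : ℝ := C₁ * c ^ (-(1/p)) * (1 - w)⁻¹ with hC₂
  have hC₂0 : 0 < C₂ := by
    apply mul_pos (mul_pos hC₁0 (Real.rpow_pos_of_pos hc0 _))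
    rw [inv_pos]; linarith
  refine ⟨C₁ + C₂, by linarith, fun u g hu hg0 hgm hgp hHaj => ?_⟩
  obtain ⟨E, hE0, hE⟩ := hHaj
  have havgp_nonneg : ∀ (x : EuclideanSpace ℝ (Fin n)) (r : ℝ),
      0 ≤ (⨍ z in ball x r, g z ^ p) := by
    intro x r
    rw [setAverage_eq, smul_eq_mul]
    exact mul_nonneg (by positivity)
      (integral_nonneg fun z => Real.rpow_nonneg (hg0 z) p)
  have part1 : ∀ (x : EuclideanSpace ℝ (Fin n)) (r : ℝ), 0 < r →
      |(⨍ z in ball x r, u z) - ⨍ z in ball x (r / 2), u z| ≤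
        (C₁ + C₂) * r ^ s * (⨍ z in ball x r, g z ^ p) ^ (1 / p) := by
    intro x r hr
    refine (osc_bound hn hs hs1 hp1 hu hg0 hgp hE0 hE x hr).trans ?_
    have : C₁ * r ^ s * (⨍ z in ball x r, g z ^ p) ^ (1 / p) ≤
        (C₁ + C₂) * r ^ s * (⨍ z in ball x r, g z ^ p) ^ (1 / p) := by
      apply mul_le_mul_of_nonneg_right _ (Real.rpow_nonneg (havgp_nonneg x r) _)
      apply mul_le_mul_of_nonneg_right (by linarith) (Real.rpow_nonneg hr.le s)
    exact this
  refine ⟨part1, ?_⟩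
  intro x r hr hlim
  set I := ∫ z in ball x r, g z ^ p with hI
  have hI0 : 0 ≤ I := integral_nonneg fun z => Real.rpow_nonneg (hg0 z) p
  set J := I ^ (1/p) with hJ
  have hJ0 : 0 ≤ J := Real.rpow_nonneg hI0 _
  -- integrability of g^p on the big ball
  have hgp_int : IntegrableOn (fun z => g z ^ p) (ball x r) volume := by
    have h := (hgp.restrict (ball x r)).integrable_norm_rpow
      (by simp [ENNReal.ofReal_eq_zero]; linarith) ENNReal.ofReal_ne_top
    rw [ENNReal.toReal_ofReal hppos.le] at h
    exact h.congr (ae_of_all _ fun z => by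
      show ‖g z‖ ^ p = g z ^ p
      rw [Real.norm_of_nonneg (hg0 z)])
  -- dyadic radii
  set ρ : ℕ → ℝ := fun k => r / 2 ^ k with hρdef
  have hρ : ∀ k, 0 < ρ k := fun k => by positivity
  have hρle : ∀ k, ρ k ≤ r := fun k => by
    rw [hρdef]
    apply div_le_self hr.le
    exact one_le_pow₀ one_le_two
  set a : ℕ → ℝ := fun k => ⨍ z in ball x (ρ k), u z with ha
  set D : ℝ := C₁ * c ^ (-(1/p)) * r ^ δ * J with hD
  have hD0 : 0 ≤ D := by
    apply mul_nonneg (mul_nonneg (mul_nonneg hC₁0.le _) _) hJ0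
    · exact Real.rpow_nonneg hc0.le _
    · exact Real.rpow_nonneg hr.le _
  -- the key per-step estimate
  have key : ∀ k : ℕ, |a k - a (k+1)| ≤ D * w ^ k := by
    intro k
    have hstep : ρ k / 2 = ρ (k+1) := by
      rw [hρdef]; simp only; rw [pow_succ]; ring
    have h1 : |a k - a (k+1)| ≤
        C₁ * (ρ k) ^ s * (⨍ z in ball x (ρ k), g z ^ p) ^ (1 / p) := by
      have := osc_bound hn hs hs1 hp1 hu hg0 hgp hE0 hE x (hρ k)
      rwa [hstep] at this
    -- bound the average of g^p on the small ball by the integral on the big ball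
    have hVk : (volume (ball x (ρ k))).toReal = (ρ k) ^ n * c := by
      rw [Measure.addHaar_ball volume x (hρ k).le, ENNReal.toReal_mul,
        ENNReal.toReal_ofReal (pow_nonneg (hρ k).le _), finrank_euclideanSpace_fin, hc]
    have hVk0 : 0 < (ρ k) ^ n * c := by positivity
    have h2 : (⨍ z in ball x (ρ k), g z ^ p) ≤ ((ρ k) ^ n * c)⁻¹ * I := by
      rw [setAverage_eq, measureReal_def, smul_eq_mul, hVk]
      apply mul_le_mul_of_nonneg_left _ (inv_nonneg.2 hVk0.le)
      exact setIntegral_mono_set hgp_int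
        (ae_of_all _ fun z => Real.rpow_nonneg (hg0 z) p)
        (HasSubset.Subset.eventuallyLE (ball_subset_ball (hρle k)))
    have h3 : (⨍ z in ball x (ρ k), g z ^ p) ^ (1/p) ≤
        (((ρ k) ^ n * c)⁻¹) ^ (1/p) * J := by
      rw [hJ, ← Real.mul_rpow (inv_nonneg.2 hVk0.le) hI0]
      exact Real.rpow_le_rpow (havgp_nonneg x (ρ k)) h2 (by positivity)
    -- rpow algebra : ((ρk)^n * c)⁻¹ ^ (1/p) = (ρ k)^(-(n/p)) * c^(-(1/p))
    have h4 : (((ρ k) ^ n * c)⁻¹) ^ (1/p) = (ρ k) ^ (-((n:ℝ)/p)) * c ^ (-(1/p)) := by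
      rw [Real.inv_rpow hVk0.le, Real.mul_rpow (pow_nonneg (hρ k).le _) hc0.le,
        mul_inv, ← Real.rpow_neg_one (((ρ k) ^ n : ℝ) ^ (1/p)),
        ← Real.rpow_neg_one (c ^ (1/p)), ← Real.rpow_natCast (ρ k) n,
        ← Real.rpow_mul (hρ k).le, ← Real.rpow_mul (hρ k).le, ← Real.rpow_mul hc0.le]
      congr 1
      · congr 1; ring
      · congr 1; ring
    -- (ρ k)^s * (ρ k)^(-(n/p)) = (ρ k)^δ = r^δ * w^k
    have h5 : (ρ k) ^ s * (ρ k) ^ (-((n:ℝ)/p)) = (ρ k) ^ δ := by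
      rw [← Real.rpow_add (hρ k), hδdef]; ring_nf
    have h6 : (ρ k) ^ δ = r ^ δ * w ^ k := by
      rw [hρdef]; simp only
      rw [Real.div_rpow hr.le (by positivity), ← Real.rpow_natCast ((2:ℝ)) k,
        ← Real.rpow_mul (by norm_num : (0:ℝ) ≤ 2), hw,
        ← Real.rpow_natCast ((2:ℝ) ^ (-δ)) k, ← Real.rpow_mul (by norm_num : (0:ℝ) ≤ 2),
        div_eq_mul_inv, ← Real.rpow_neg (by norm_num : (0:ℝ) ≤ 2)]
      congr 1
      ring
    calc |a k - a (k+1)| ≤ C₁ * (ρ k) ^ s * (⨍ z in ball x (ρ k), g z ^ p) ^ (1 / p) := h1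
      _ ≤ C₁ * (ρ k) ^ s * ((((ρ k) ^ n * c)⁻¹) ^ (1/p) * J) := by
          apply mul_le_mul_of_nonneg_left h3
          positivity
      _ = D * w ^ k := by
          rw [h4]
          have h7 : C₁ * ρ k ^ s * (ρ k ^ (-((n:ℝ)/p)) * c ^ (-(1/p)) * J)
              = C₁ * c ^ (-(1/p)) * (ρ k ^ s * ρ k ^ (-((n:ℝ)/p))) * J := by ring
          rw [h7, h5, h6, hD]; ring
  -- summability and limit
  have hsum : Summable (fun k : ℕ => D * w ^ k) :=
    (summable_geometric_of_lt_one hw0.le hw1).mul_left D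
  have htsum : ∑' k : ℕ, D * w ^ k = D * (1 - w)⁻¹ := by
    rw [tsum_mul_left, tsum_geometric_of_lt_one hw0.le hw1]
  have h2k : Tendsto (fun k : ℕ => (2:ℝ) ^ k) atTop atTop :=
    tendsto_pow_atTop_atTop_of_one_lt one_lt_two
  have h0 : Tendsto ρ atTop (nhds 0) := Tendsto.div_atTop tendsto_const_nhds h2k
  have h0' : Tendsto ρ atTop (nhdsWithin 0 (Set.Ioi 0)) :=
    tendsto_nhdsWithin_of_tendsto_nhds_of_eventually_within _ h0
      (Eventually.of_forall fun k => hρ k)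
  have h_tend : Tendsto a atTop (nhds (u x)) := hlim.comp h0'
  have final : dist (a 0) (u x) ≤ ∑' k : ℕ, D * w ^ k :=
    dist_le_tsum_of_dist_le_of_tendsto₀ _ (fun k => by
      rw [Real.dist_eq]; exact key k) hsum h_tend
  rw [htsum] at final
  have ha0 : a 0 = ⨍ z in ball x r, u z := by
    rw [ha]; simp only; rw [hρdef]; norm_num
  have hfin2 : |u x - ⨍ z in ball x r, u z| ≤ D * (1 - w)⁻¹ := by
    rw [← ha0, abs_sub_comm, ← Real.dist_eq]
    exact final
  refine hfin2.trans ?_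
  have : D * (1 - w)⁻¹ = C₂ * r ^ δ * J := by rw [hD, hC₂]; ring
  rw [this, hδdef]
  apply mul_le_mul_of_nonneg_right _ hJ0
  apply mul_le_mul_of_nonneg_right _ (Real.rpow_nonneg hr.le _)
  linarith
end

section
/- Let s ∈ (0,1] and p ∈ (n/s, ∞). If u : ℝⁿ → ℝ is measurable with an s-Hajłasz gradient g ∈ L^p(ℝⁿ), then u has a representative that is (s − n/p)-Hölder continuous, and |u(x) − u(y)| ≤ C(n,s,p) |x−y|^{s−n/p} (∫_{B(x, 2|x−y|)} g(z)^p dz)^{1/p} for all Lebesgue points x, y of u. -/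
open MeasureTheory Metric Set Filter
open scoped ENNReal

/-- `x` is a Lebesgue point of `u`: the averages of `u` over small balls centered
at `x` converge to `u x`. -/
def IsLebesguePoint {n : ℕ} (u : EuclideanSpace ℝ (Fin n) → ℝ)
    (x : EuclideanSpace ℝ (Fin n)) : Prop :=
  Tendsto (fun ρ => ⨍ z in ball x ρ, u z) (nhdsWithin 0 (Set.Ioi 0)) (nhds (u x))
theorem restrict_ball_eq {n : ℕ} [Nontrivial (EuclideanSpace ℝ (Fin n))]
    (x : EuclideanSpace ℝ (Fin n)) (ρ : ℝ) :
    volume.restrict (closedBall x ρ) = volume.restrict (ball x ρ) := by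
  apply Measure.restrict_congr_set
  rw [MeasureTheory.ae_eq_set]
  refine ⟨measure_mono_null (fun z hz => ?_) (Measure.addHaar_sphere volume x ρ), ?_⟩
  · simp only [mem_diff, mem_closedBall, mem_ball, not_lt] at hz
    exact mem_sphere.2 (le_antisymm hz.1 hz.2)
  · rw [diff_eq_empty.2 ball_subset_closedBall]; simp

theorem avg_ball_eq {n : ℕ} [Nontrivial (EuclideanSpace ℝ (Fin n))]
    (u : EuclideanSpace ℝ (Fin n) → ℝ) (x : EuclideanSpace ℝ (Fin n)) (ρ : ℝ) :
    ⨍ z in closedBall x ρ, u z = ⨍ z in ball x ρ, u z := by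
  rw [setAverage_eq', setAverage_eq', restrict_ball_eq,
    Measure.addHaar_closedBall_eq_addHaar_ball]

theorem ae_lebesgue {n : ℕ} [Nontrivial (EuclideanSpace ℝ (Fin n))]
    {u : EuclideanSpace ℝ (Fin n) → ℝ} (hu : LocallyIntegrable u volume) :
    ∀ᵐ x, Tendsto (fun ρ => ⨍ z in ball x ρ, u z) (nhdsWithin 0 (Set.Ioi 0)) (nhds (u x)) := by
  filter_upwards [IsUnifLocDoublingMeasure.ae_tendsto_average (μ := volume) hu 1] with x hx
  have h := hx (ι := ℝ) (l := nhdsWithin 0 (Set.Ioi 0)) (fun _ => x) id tendsto_id (by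
    filter_upwards [self_mem_nhdsWithin] with ρ (hρ : ρ ∈ Set.Ioi 0)
    exact mem_closedBall_self (by simpa using (le_of_lt hρ)))
  simpa only [avg_ball_eq, id] using h

theorem holder_step {n : ℕ} {p : ℝ} (hp1 : 1 < p)
    {g : EuclideanSpace ℝ (Fin n) → ℝ} (hg0 : ∀ x, 0 ≤ g x)
    (hgp : MemLp g (ENNReal.ofReal p) volume)
    {D : Set (EuclideanSpace ℝ (Fin n))} (hfin : volume D < ⊤) :
    ∫ z in D, g z ≤ (∫ z in D, g z ^ p) ^ (1/p) * ((volume D).toReal) ^ (1 - 1/p) := by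
  haveI : IsFiniteMeasure (volume.restrict D) := ⟨by rwa [Measure.restrict_apply_univ]⟩
  have hpq : p.HolderConjugate (p.conjExponent) := Real.HolderConjugate.conjExponent hp1
  have h1 : MemLp (fun _ : EuclideanSpace ℝ (Fin n) => (1:ℝ)) (ENNReal.ofReal p.conjExponent)
      (volume.restrict D) := memLp_const 1
  have h := integral_mul_norm_le_Lp_mul_Lq (μ := volume.restrict D) hpq (hgp.restrict D) h1
  simp only [norm_one, mul_one, Real.one_rpow] at h
  have hq : 1 / p.conjExponent = 1 - 1/p := by
    have h2 := hpq.inv_add_inv_eq_one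
    rw [one_div, one_div]; linarith
  calc ∫ z in D, g z = ∫ z in D, ‖g z‖ := by
        refine integral_congr_ae (Eventually.of_forall fun z => ?_)
        simp [Real.norm_eq_abs, abs_of_nonneg (hg0 z)]
    _ ≤ (∫ z in D, ‖g z‖ ^ p) ^ (1/p) * (∫ (_ : EuclideanSpace ℝ (Fin n)) in D, (1:ℝ)) ^ (1/p.conjExponent) := h
    _ = (∫ z in D, g z ^ p) ^ (1/p) * ((volume D).toReal) ^ (1 - 1/p) := by
        rw [hq]
        congr 2
        · refine integral_congr_ae (Eventually.of_forall fun z => ?_)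
          simp [Real.norm_eq_abs, abs_of_nonneg (hg0 z)]
        · simp [measureReal_def]

theorem pair_est {n : ℕ} {s : ℝ} (hs : 0 < s) {u g : EuclideanSpace ℝ (Fin n) → ℝ}
    (hg0 : ∀ x, 0 ≤ g x) {E : Set (EuclideanSpace ℝ (Fin n))} (hE : volume E = 0)
    (hH : ∀ x ∉ E, ∀ y ∉ E, |u x - u y| ≤ dist x y ^ s * (g x + g y))
    {c : EuclideanSpace ℝ (Fin n)} {R : ℝ} (hR : 0 < R)
    (hu : IntegrableOn u (ball c R) volume) (hgint : IntegrableOn g (ball c R) volume)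
    {D : Set (EuclideanSpace ℝ (Fin n))} (hDm : MeasurableSet D)
    (hDsub : D ⊆ ball c R) (hDpos : 0 < volume D) :
    |((volume D).toReal⁻¹ * ∫ z in D, u z) - (volume (ball c R)).toReal⁻¹ * ∫ w in ball c R, u w|
      ≤ (2*R)^s * (((volume D).toReal⁻¹ * ∫ z in D, g z)
          + (volume (ball c R)).toReal⁻¹ * ∫ w in ball c R, g w) := by
  have halg : ∀ (m a i b : ℝ), m ≠ 0 → m⁻¹ * (a * (i + m * b)) = a * (m⁻¹ * i + b) := by
    intro m a i b hm
    calc m⁻¹ * (a * (i + m * b)) = a * (m⁻¹ * i + (m⁻¹ * m) * b) := by ring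
      _ = a * (m⁻¹ * i + b) := by rw [inv_mul_cancel₀ hm, one_mul]
  have halg2 : ∀ (m a x i : ℝ), m ≠ 0 → m⁻¹ * (a * (m * x + i)) = a * (x + m⁻¹ * i) := by
    intro m a x i hm
    calc m⁻¹ * (a * (m * x + i)) = a * ((m⁻¹ * m) * x + m⁻¹ * i) := by ring
      _ = a * (x + m⁻¹ * i) := by rw [inv_mul_cancel₀ hm, one_mul]
  set B := ball c R with hB
  have hBm : MeasurableSet B := measurableSet_ball
  have hBfin : volume B < ⊤ := measure_ball_lt_top
  have hDfin : volume D < ⊤ := lt_of_le_of_lt (measure_mono hDsub) hBfin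
  have hBpos : (0:ℝ≥0∞) < volume B := lt_of_lt_of_le hDpos (measure_mono hDsub)
  set mB := (volume B).toReal with hmB
  set mD := (volume D).toReal with hmD
  have hmBpos : 0 < mB := ENNReal.toReal_pos hBpos.ne' hBfin.ne
  have hmDpos : 0 < mD := ENNReal.toReal_pos hDpos.ne' hDfin.ne
  have huD : IntegrableOn u D volume := hu.mono_set hDsub
  have hgD : IntegrableOn g D volume := hgint.mono_set hDsub
  set cB := mB⁻¹ * ∫ w in B, u w with hcB
  set aB := mB⁻¹ * ∫ w in B, g w with haB
  have haBnn : 0 ≤ aB := mul_nonneg (inv_nonneg.2 hmBpos.le)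
    (setIntegral_nonneg hBm fun w _ => hg0 w)
  -- Step A : pointwise bound off E inside B
  have stepA : ∀ z ∈ B, z ∉ E → |u z - cB| ≤ (2*R)^s * (g z + aB) := by
    intro z hzB hzE
    have h1 : u z - cB = mB⁻¹ * ∫ w in B, (u z - u w) := by
      rw [integral_sub (integrableOn_const (C := u z) hBfin.ne enorm_ne_top) hu, setIntegral_const, measureReal_def,
        smul_eq_mul, hcB, mul_sub, ← mul_assoc, inv_mul_cancel₀ hmBpos.ne', one_mul]
    rw [h1, abs_mul, abs_of_nonneg (inv_nonneg.2 hmBpos.le)]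
    have h2 : |∫ w in B, (u z - u w)| ≤ ∫ w in B, |u z - u w| := by
      simpa [Real.norm_eq_abs] using
        norm_integral_le_integral_norm (μ := volume.restrict B) (fun w => u z - u w)
    have h3 : ∫ w in B, |u z - u w| ≤ ∫ w in B, (2*R)^s * (g z + g w) := by
      refine integral_mono_ae ((integrableOn_const hBfin.ne enorm_ne_top).sub hu).abs
        (((integrableOn_const hBfin.ne enorm_ne_top).add hgint).const_mul _) ?_
      have hEc : ∀ᵐ w ∂(volume.restrict B), w ∉ E :=
        ae_restrict_of_ae ((ae_iff).2 (by simpa using hE))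
      filter_upwards [hEc, ae_restrict_mem hBm] with w hwE hwB
      refine (hH z hzE w hwE).trans ?_
      have hd : dist z w ≤ 2 * R := by
        have := dist_triangle z c w
        rw [mem_ball] at hzB hwB
        rw [dist_comm c w] at this
        linarith [this, hzB.le, hwB.le]
      refine mul_le_mul_of_nonneg_right ?_ (add_nonneg (hg0 z) (hg0 w))
      exact Real.rpow_le_rpow dist_nonneg hd hs.le
    have h4 : ∫ w in B, (2*R)^s * (g z + g w) = (2*R)^s * (mB * g z + ∫ w in B, g w) := by
      rw [integral_const_mul, integral_add (integrableOn_const (C := g z) hBfin.ne enorm_ne_top) hgint,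
        setIntegral_const, measureReal_def, smul_eq_mul]
    calc mB⁻¹ * |∫ w in B, (u z - u w)| ≤ mB⁻¹ * ∫ w in B, (2*R)^s * (g z + g w) := by
          exact mul_le_mul_of_nonneg_left (h2.trans h3) (inv_nonneg.2 hmBpos.le)
      _ = (2*R)^s * (g z + aB) := by
          rw [h4]; exact halg2 _ _ _ _ hmBpos.ne'
  -- Step B : average over D
  have h5 : mD⁻¹ * ∫ z in D, (u z - cB) = (mD⁻¹ * ∫ z in D, u z) - cB := by
    rw [integral_sub huD (integrableOn_const hDfin.ne enorm_ne_top), setIntegral_const, measureReal_def,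
      smul_eq_mul, mul_sub, ← mul_assoc, inv_mul_cancel₀ hmDpos.ne', one_mul]
  rw [← h5, abs_mul, abs_of_nonneg (inv_nonneg.2 hmDpos.le)]
  have h6 : |∫ z in D, (u z - cB)| ≤ ∫ z in D, |u z - cB| := by
    simpa [Real.norm_eq_abs] using
      norm_integral_le_integral_norm (μ := volume.restrict D) (fun z => u z - cB)
  have h7 : ∫ z in D, |u z - cB| ≤ ∫ z in D, (2*R)^s * (g z + aB) := by
    refine integral_mono_ae (huD.sub (integrableOn_const hDfin.ne enorm_ne_top)).abs
      ((hgD.add (integrableOn_const hDfin.ne enorm_ne_top)).const_mul _) ?_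
    have hEc : ∀ᵐ z ∂(volume.restrict D), z ∉ E :=
      ae_restrict_of_ae ((ae_iff).2 (by simpa using hE))
    filter_upwards [hEc, ae_restrict_mem hDm] with z hzE hzD
    exact stepA z (hDsub hzD) hzE
  have h8 : ∫ z in D, (2*R)^s * (g z + aB) = (2*R)^s * ((∫ z in D, g z) + mD * aB) := by
    rw [integral_const_mul, integral_add hgD (integrableOn_const hDfin.ne enorm_ne_top),
      setIntegral_const, measureReal_def, smul_eq_mul]
  calc mD⁻¹ * |∫ z in D, (u z - cB)| ≤ mD⁻¹ * ∫ z in D, (2*R)^s * (g z + aB) :=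
        mul_le_mul_of_nonneg_left (h6.trans h7) (inv_nonneg.2 hmDpos.le)
    _ = (2*R)^s * ((mD⁻¹ * ∫ z in D, g z) + aB) := by
        rw [h8]; exact halg mD ((2*R)^s) (∫ z in D, g z) aB hmDpos.ne'

noncomputable def ballVol (n : ℕ) : ℝ := (volume (ball (0 : EuclideanSpace ℝ (Fin n)) 1)).toReal

theorem ballVol_pos (n : ℕ) : 0 < ballVol n :=
  ENNReal.toReal_pos (measure_ball_pos volume 0 one_pos).ne' measure_ball_lt_top.ne

theorem mball {n : ℕ} [Nontrivial (EuclideanSpace ℝ (Fin n))]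
    (x : EuclideanSpace ℝ (Fin n)) {r : ℝ} (hr : 0 ≤ r) :
    (volume (ball x r)).toReal = r ^ n * ballVol n := by
  rw [Measure.addHaar_ball volume x hr, finrank_euclideanSpace_fin, ENNReal.toReal_mul,
    ENNReal.toReal_ofReal (pow_nonneg hr n)]
  rfl

theorem gp_integrable {n : ℕ} {p : ℝ} (hp0 : 0 < p)
    {g : EuclideanSpace ℝ (Fin n) → ℝ} (hg0 : ∀ x, 0 ≤ g x)
    (hgp : MemLp g (ENNReal.ofReal p) volume) :
    Integrable (fun z => g z ^ p) volume := by
  have h := hgp.integrable_norm_rpow (by simp [hp0]) (by simp)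
  rw [ENNReal.toReal_ofReal hp0.le] at h
  refine h.congr (Eventually.of_forall fun z => ?_)
  simp [Real.norm_eq_abs, abs_of_nonneg (hg0 z)]

theorem avg_bound {n : ℕ} {p : ℝ} (hp1 : 1 < p)
    {g : EuclideanSpace ℝ (Fin n) → ℝ} (hg0 : ∀ x, 0 ≤ g x)
    (hgp : MemLp g (ENNReal.ofReal p) volume)
    {D S : Set (EuclideanSpace ℝ (Fin n))} (hsub : D ⊆ S)
    (hDpos : 0 < volume D) (hDfin : volume D < ⊤) :
    (volume D).toReal⁻¹ * ∫ z in D, g z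
      ≤ ((volume D).toReal) ^ (-(1/p)) * (∫ z in S, g z ^ p) ^ (1/p) := by
  set mD := (volume D).toReal with hmD
  have hmDpos : 0 < mD := ENNReal.toReal_pos hDpos.ne' hDfin.ne
  have hgp_int : Integrable (fun z => g z ^ p) volume :=
    gp_integrable (lt_trans one_pos hp1) hg0 hgp
  have h1 := holder_step hp1 hg0 hgp hDfin
  have h2 : ∫ z in D, g z ^ p ≤ ∫ z in S, g z ^ p :=
    integral_mono_measure (Measure.restrict_mono hsub le_rfl)
      (Eventually.of_forall fun z => Real.rpow_nonneg (hg0 z) p) hgp_int.integrableOn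
  have h3 : (∫ z in D, g z ^ p) ^ (1/p) ≤ (∫ z in S, g z ^ p) ^ (1/p) :=
    Real.rpow_le_rpow (integral_nonneg fun z => Real.rpow_nonneg (hg0 z) p) h2
      (by positivity)
  have h4 : mD⁻¹ * mD ^ (1 - 1/p) = mD ^ (-(1/p)) := by
    rw [← Real.rpow_neg_one mD, ← Real.rpow_add hmDpos]
    congr 1; ring
  calc mD⁻¹ * ∫ z in D, g z
      ≤ mD⁻¹ * ((∫ z in D, g z ^ p) ^ (1/p) * mD ^ (1 - 1/p)) :=
        mul_le_mul_of_nonneg_left h1 (inv_nonneg.2 hmDpos.le)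
    _ = (∫ z in D, g z ^ p) ^ (1/p) * (mD⁻¹ * mD ^ (1 - 1/p)) := by ring
    _ = mD ^ (-(1/p)) * (∫ z in D, g z ^ p) ^ (1/p) := by rw [h4]; ring
    _ ≤ mD ^ (-(1/p)) * (∫ z in S, g z ^ p) ^ (1/p) :=
        mul_le_mul_of_nonneg_left h3 (Real.rpow_nonneg hmDpos.le _)

theorem chain_est {n : ℕ} [Nontrivial (EuclideanSpace ℝ (Fin n))] {s p : ℝ}
    (hs : 0 < s) (hp1 : 1 < p) (hε : 0 < s - (n:ℝ)/p)
    {u g : EuclideanSpace ℝ (Fin n) → ℝ} (hg0 : ∀ x, 0 ≤ g x)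
    (hgp : MemLp g (ENNReal.ofReal p) volume)
    {E : Set (EuclideanSpace ℝ (Fin n))} (hE : volume E = 0)
    (hH : ∀ x ∉ E, ∀ y ∉ E, |u x - u y| ≤ dist x y ^ s * (g x + g y))
    (hu_loc : ∀ (c : EuclideanSpace ℝ (Fin n)) (r : ℝ), IntegrableOn u (ball c r) volume)
    (hg_loc : ∀ (c : EuclideanSpace ℝ (Fin n)) (r : ℝ), IntegrableOn g (ball c r) volume)
    {x : EuclideanSpace ℝ (Fin n)} (hx : IsLebesguePoint u x) {R : ℝ} (hR : 0 < R)
    {S : Set (EuclideanSpace ℝ (Fin n))} (hSsub : ball x R ⊆ S) :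
    |u x - (volume (ball x R)).toReal⁻¹ * ∫ z in ball x R, u z| ≤
      (1 - (2:ℝ) ^ (-(s - (n:ℝ)/p)))⁻¹ *
        (2 * 2 ^ s * 2 ^ ((n:ℝ)/p) * (ballVol n) ^ (-(1/p))) *
        R ^ (s - (n:ℝ)/p) * (∫ z in S, g z ^ p) ^ (1/p) := by
  set ε := s - (n:ℝ)/p with hεdef
  set t := (2:ℝ) ^ (-ε) with htdef
  have ht0 : 0 ≤ t := Real.rpow_nonneg (by norm_num) _
  have ht1 : t < 1 := Real.rpow_lt_one_of_one_lt_of_neg one_lt_two (by linarith)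
  set GS := (∫ z in S, g z ^ p) ^ (1/p) with hGS
  have hGS0 : 0 ≤ GS := Real.rpow_nonneg (integral_nonneg fun z => Real.rpow_nonneg (hg0 z) p) _
  set q := (1:ℝ)/2 with hqdef
  have hq0 : 0 < q := by norm_num
  set r : ℕ → ℝ := fun i => R * q ^ i with hrdef
  have hrpos : ∀ i, 0 < r i := fun i => mul_pos hR (pow_pos hq0 i)
  have hrmono : ∀ i, r (i+1) ≤ r i := by
    intro i
    simp only [hrdef]
    have : q ^ (i+1) ≤ q ^ i := pow_le_pow_of_le_one hq0.le (by norm_num) (Nat.le_succ i)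
    nlinarith
  have hrle : ∀ i, r i ≤ R := by
    intro i
    have : q ^ i ≤ 1 := pow_le_one₀ hq0.le (by norm_num)
    simp only [hrdef]; nlinarith
  set a : ℕ → ℝ := fun i => (volume (ball x (r i))).toReal⁻¹ * ∫ z in ball x (r i), u z
    with hadef
  -- convergence of a to u x
  have hseq : Tendsto r atTop (nhdsWithin 0 (Set.Ioi 0)) := by
    apply tendsto_nhdsWithin_of_tendsto_nhds_of_eventually_within
    · have h2 : Tendsto (fun i : ℕ => q ^ i) atTop (nhds 0) :=
        tendsto_pow_atTop_nhds_zero_of_lt_one hq0.le (by norm_num)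
      simpa using h2.const_mul R
    · exact Eventually.of_forall fun i => hrpos i
  have hatend : Tendsto a atTop (nhds (u x)) := by
    have h := hx.comp hseq
    refine h.congr fun i => ?_
    simp only [Function.comp_apply, setAverage_eq, smul_eq_mul, measureReal_def]; rfl
  -- the constant
  set K := 2 * (2*R) ^ s * ((R/2) ^ (-((n:ℝ)/p)) * ((ballVol n) ^ (-(1/p)) * GS)) with hKdef
  -- step estimate
  have hstep : ∀ i, dist (a i) (a (i+1)) ≤ K * t ^ i := by
    intro i
    have hsub : ball x (r (i+1)) ⊆ ball x (r i) := ball_subset_ball (hrmono i)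
    have hpair := pair_est hs hg0 hE hH (hrpos i) (hu_loc x (r i)) (hg_loc x (r i))
      measurableSet_ball hsub (measure_ball_pos volume x (hrpos (i+1)))
    have hSi : ∀ j, ball x (r j) ⊆ S := fun j => (ball_subset_ball (hrle j)).trans hSsub
    -- bounds on the two averages of g
    have hb1 := avg_bound hp1 hg0 hgp (hSi (i+1)) (measure_ball_pos volume x (hrpos (i+1)))
      measure_ball_lt_top
    have hb2 := avg_bound hp1 hg0 hgp (hSi i) (measure_ball_pos volume x (hrpos i))
      measure_ball_lt_top
    -- measures of the balls
    have hm1 : (volume (ball x (r (i+1)))).toReal = (r (i+1)) ^ n * ballVol n :=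
      mball x (hrpos (i+1)).le
    have hm2 : (volume (ball x (r i))).toReal = (r i) ^ n * ballVol n :=
      mball x (hrpos i).le
    have hmpos1 : 0 < (r (i+1)) ^ n * ballVol n :=
      mul_pos (pow_pos (hrpos (i+1)) n) (ballVol_pos n)
    have hmpos2 : 0 < (r i) ^ n * ballVol n :=
      mul_pos (pow_pos (hrpos i) n) (ballVol_pos n)
    have hmle : (r (i+1)) ^ n * ballVol n ≤ (r i) ^ n * ballVol n := by
      have := pow_le_pow_left₀ (hrpos (i+1)).le (hrmono i) n
      nlinarith [ballVol_pos n]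
    have hanti : ((r i) ^ n * ballVol n) ^ (-(1/p)) ≤ ((r (i+1)) ^ n * ballVol n) ^ (-(1/p)) :=
      Real.rpow_le_rpow_of_nonpos hmpos1 hmle (neg_nonpos.2 (by positivity))
    -- combine
    have hcomb : dist (a i) (a (i+1)) ≤
        (2 * r i) ^ s * (2 * (((r (i+1)) ^ n * ballVol n) ^ (-(1/p)) * GS)) := by
      rw [dist_comm, Real.dist_eq]
      simp only [hadef]
      refine hpair.trans ?_
      have e1 : (volume (ball x (r (i+1)))).toReal⁻¹ * ∫ z in ball x (r (i+1)), g z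
          ≤ ((r (i+1)) ^ n * ballVol n) ^ (-(1/p)) * GS := by
        have := mul_le_mul_of_nonneg_right
          (le_refl (((r (i+1)) ^ n * ballVol n) ^ (-(1/p)))) hGS0
        rw [← hm1]
        exact hb1
      have e2 : (volume (ball x (r i))).toReal⁻¹ * ∫ z in ball x (r i), g z
          ≤ ((r (i+1)) ^ n * ballVol n) ^ (-(1/p)) * GS := by
        refine hb2.trans ?_
        rw [hm2]
        exact mul_le_mul_of_nonneg_right hanti hGS0
      have hadd := add_le_add e1 e2
      refine (mul_le_mul_of_nonneg_left hadd (Real.rpow_nonneg (by positivity) s)).trans_eq ?_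
      ring
    refine hcomb.trans_eq ?_
    have hqi : (0:ℝ) < q ^ i := pow_pos hq0 i
    have hq2 : ∀ Y : ℝ, q ^ Y = 2 ^ (-Y) := fun Y => by
      rw [hqdef, one_div, Real.inv_rpow (by norm_num : (0:ℝ) ≤ 2),
        ← Real.rpow_neg (by norm_num : (0:ℝ) ≤ 2)]
    have e3 : (2 * r i) ^ s = (2*R) ^ s * (q ^ i) ^ s := by
      rw [← Real.mul_rpow (by positivity) hqi.le]
      congr 1
      simp only [hrdef]; ring
    have e4 : ((r (i+1)) ^ n * ballVol n) ^ (-(1/p))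
        = (R/2) ^ (-((n:ℝ)/p)) * (q ^ i) ^ (-((n:ℝ)/p)) * (ballVol n) ^ (-(1/p)) := by
      rw [Real.mul_rpow (by positivity) (ballVol_pos n).le]
      congr 1
      have h5 : r (i+1) = (R/2) * q ^ i := by
        simp only [hrdef, pow_succ, hqdef]; ring
      rw [h5, ← Real.rpow_natCast ((R/2) * q^i) n, ← Real.rpow_mul (by positivity),
        show ((n:ℝ) * (-(1/p))) = -((n:ℝ)/p) by ring,
        Real.mul_rpow (by positivity) hqi.le]
    have e5 : (q ^ i) ^ s * (q ^ i) ^ (-((n:ℝ)/p)) = t ^ i := by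
      rw [htdef, ← Real.rpow_natCast ((2:ℝ)^(-ε)) i,
        ← Real.rpow_mul (by norm_num : (0:ℝ) ≤ 2),
        ← Real.rpow_natCast q i, ← Real.rpow_mul hq0.le, ← Real.rpow_mul hq0.le,
        ← Real.rpow_add hq0, hq2]
      congr 1
      rw [hεdef]; ring
    rw [hKdef, e3, e4, ← e5]
    ring
  -- sum up
  have hsum : Summable (fun i => K * t ^ i) := (summable_geometric_of_lt_one ht0 ht1).mul_left K
  have hdist := dist_le_tsum_of_dist_le_of_tendsto₀ (fun i => K * t ^ i) hstep hsum hatend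
  rw [tsum_mul_left, tsum_geometric_of_lt_one ht0 ht1] at hdist
  have ha0 : a 0 = (volume (ball x R)).toReal⁻¹ * ∫ z in ball x R, u z := by
    simp only [hadef, hrdef]; norm_num
  have habs : |u x - (volume (ball x R)).toReal⁻¹ * ∫ z in ball x R, u z| = dist (a 0) (u x) := by
    rw [Real.dist_eq, ha0, abs_sub_comm]
  rw [habs]
  refine hdist.trans_eq ?_
  rw [hKdef]
  have hA : (2*R) ^ s = 2 ^ s * R ^ s := Real.mul_rpow (by norm_num) hR.le
  have hB : (R/2) ^ (-((n:ℝ)/p)) = R ^ (-((n:ℝ)/p)) * 2 ^ ((n:ℝ)/p) := by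
    rw [div_eq_mul_inv, Real.mul_rpow hR.le (by norm_num),
      Real.inv_rpow (by norm_num : (0:ℝ) ≤ 2), Real.rpow_neg (by norm_num : (0:ℝ) ≤ 2), inv_inv]
  have hC : s + -((n:ℝ)/p) = ε := by rw [hεdef]; ring
  rw [hA, hB, ← hC, Real.rpow_add hR]
  ring

theorem g_loc {n : ℕ} {p : ℝ} (hp1 : 1 ≤ p) {g : EuclideanSpace ℝ (Fin n) → ℝ}
    (hgp : MemLp g (ENNReal.ofReal p) volume) (c : EuclideanSpace ℝ (Fin n)) (r : ℝ) :
    IntegrableOn g (ball c r) volume := by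
  haveI : IsFiniteMeasure (volume.restrict (ball c r)) :=
    ⟨by rw [Measure.restrict_apply_univ]; exact measure_ball_lt_top⟩
  have h1 : (1:ℝ≥0∞) ≤ ENNReal.ofReal p := by
    rw [show (1:ℝ≥0∞) = ENNReal.ofReal 1 by simp]
    exact ENNReal.ofReal_le_ofReal hp1
  exact memLp_one_iff_integrable.1 ((hgp.restrict (ball c r)).mono_exponent h1)

theorem u_loc {n : ℕ} {s p : ℝ} (hs : 0 < s) (hp1 : 1 ≤ p)
    {u g : EuclideanSpace ℝ (Fin n) → ℝ} (hum : Measurable u) (hg0 : ∀ x, 0 ≤ g x)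
    (hgp : MemLp g (ENNReal.ofReal p) volume)
    {E : Set (EuclideanSpace ℝ (Fin n))} (hE : volume E = 0)
    (hH : ∀ x ∉ E, ∀ y ∉ E, |u x - u y| ≤ dist x y ^ s * (g x + g y))
    (c : EuclideanSpace ℝ (Fin n)) (r : ℝ) :
    IntegrableOn u (ball c r) volume := by
  rcases le_or_gt r 0 with hr | hr
  · rw [ball_eq_empty.2 hr]; exact integrableOn_empty
  · -- find a good point w
    have hne : (ball c r \ E).Nonempty := by
      rw [Set.nonempty_iff_ne_empty]
      intro hemp
      have hsub : ball c r ⊆ E := fun z hz => by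
        by_contra hzE
        exact (Set.eq_empty_iff_forall_notMem.1 hemp z) ⟨hz, hzE⟩
      exact absurd (le_antisymm ((measure_mono hsub).trans hE.le) (by positivity))
        (measure_ball_pos volume c hr).ne'
    obtain ⟨w, hwB, hwE⟩ := hne
    refine Integrable.mono' (g := fun z => (|u w| + (2*r)^s * g w) + (2*r)^s * g z)
      ((integrableOn_const measure_ball_lt_top.ne enorm_ne_top).add
        ((g_loc hp1 hgp c r).const_mul _)) (hum.aestronglyMeasurable.restrict) ?_
    have hEc : ∀ᵐ z ∂(volume.restrict (ball c r)), z ∉ E :=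
      ae_restrict_of_ae ((ae_iff).2 (by simpa using hE))
    filter_upwards [hEc, ae_restrict_mem measurableSet_ball] with z hzE hzB
    have hd : dist z w ≤ 2 * r := by
      have h1 := mem_ball.1 hzB
      have h2 := mem_ball.1 hwB
      have h3 := dist_triangle z c w
      rw [dist_comm c w] at h3
      linarith
    have h4 : |u z - u w| ≤ (2*r)^s * (g z + g w) := by
      refine (hH z hzE w hwE).trans ?_
      exact mul_le_mul_of_nonneg_right (Real.rpow_le_rpow dist_nonneg hd hs.le)
        (add_nonneg (hg0 z) (hg0 w))
    rw [Real.norm_eq_abs]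
    have h5 : |u z| ≤ |u w| + |u z - u w| := by
      have := abs_sub_abs_le_abs_sub (u z) (u w)
      linarith [abs_sub_abs_le_abs_sub (u z) (u w)]
    nlinarith [h4, h5, Real.rpow_nonneg (by linarith : (0:ℝ) ≤ 2*r) s, hg0 z, hg0 w]

theorem norm_toReal_eq {n : ℕ} {p : ℝ} (hp0 : 0 < p)
    {g : EuclideanSpace ℝ (Fin n) → ℝ} (hg0 : ∀ x, 0 ≤ g x) (hgm : Measurable g) :
    (eLpNorm g (ENNReal.ofReal p) volume).toReal = (∫ z, g z ^ p) ^ (1/p) := by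
  rw [eLpNorm_eq_lintegral_rpow_enorm_toReal (by simpa using hp0)
    (by simp), ENNReal.toReal_ofReal hp0.le]
  rw [← ENNReal.toReal_rpow]
  congr 1
  have h1 : ∫ z, g z ^ p = (∫⁻ z, ENNReal.ofReal (g z ^ p)).toReal := by
    rw [← integral_eq_lintegral_of_nonneg_ae
      (Eventually.of_forall fun z => Real.rpow_nonneg (hg0 z) p)
      ((hgm.pow_const p).aestronglyMeasurable)]
  rw [h1]
  congr 1
  refine lintegral_congr fun z => ?_
  rw [← ENNReal.ofReal_rpow_of_nonneg (hg0 z) hp0.le]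
  congr 1
  rw [← ofReal_norm_eq_enorm, Real.norm_eq_abs, abs_of_nonneg (hg0 z)]

theorem rpow_subadd {ε : ℝ} (hε : 0 < ε) (hε1 : ε ≤ 1) {a b : ℝ} (ha : 0 ≤ a) (hb : 0 ≤ b) :
    (a + b) ^ ε ≤ a ^ ε + b ^ ε := by
  have h := NNReal.rpow_add_le_add_rpow (a.toNNReal) (b.toNNReal) hε.le hε1
  have h2 := NNReal.coe_le_coe.2 h
  push_cast at h2
  rwa [Real.coe_toNNReal a ha, Real.coe_toNNReal b hb] at h2

theorem dist_rpow_tri {X : Type*} [PseudoMetricSpace X] {ε : ℝ} (hε : 0 < ε) (hε1 : ε ≤ 1)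
    (x y z : X) : dist x z ^ ε ≤ dist x y ^ ε + dist y z ^ ε :=
  (Real.rpow_le_rpow dist_nonneg (dist_triangle x y z) hε.le).trans
    (rpow_subadd hε hε1 dist_nonneg dist_nonneg)

theorem mcshane {n : ℕ} {ε K : ℝ} (hε : 0 < ε) (hε1 : ε ≤ 1) (hK : 0 ≤ K)
    {u : EuclideanSpace ℝ (Fin n) → ℝ} {L : Set (EuclideanSpace ℝ (Fin n))}
    (hL : L.Nonempty) (hld : ∀ x ∈ L, ∀ y ∈ L, |u x - u y| ≤ K * dist x y ^ ε) :
    ∃ v : EuclideanSpace ℝ (Fin n) → ℝ, (∀ x ∈ L, v x = u x) ∧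
      ∀ x y, |v x - v y| ≤ K * dist x y ^ ε := by
  obtain ⟨y₀, hy₀⟩ := hL
  set F : EuclideanSpace ℝ (Fin n) → EuclideanSpace ℝ (Fin n) → ℝ :=
    fun x z => u z + K * dist x z ^ ε with hF
  set v : EuclideanSpace ℝ (Fin n) → ℝ := fun x => sInf (F x '' L) with hv
  have hne : ∀ x, (F x '' L).Nonempty := fun x => ⟨F x y₀, Set.mem_image_of_mem _ hy₀⟩
  have hbdd : ∀ x, BddBelow (F x '' L) := by
    intro x
    refine ⟨u y₀ - K * dist x y₀ ^ ε, ?_⟩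
    rintro t ⟨z, hzL, rfl⟩
    have h1 : |u z - u y₀| ≤ K * dist z y₀ ^ ε := hld z hzL y₀ hy₀
    have h2 : dist z y₀ ^ ε ≤ dist z x ^ ε + dist x y₀ ^ ε := dist_rpow_tri hε hε1 z x y₀
    have h3 : u z ≥ u y₀ - K * dist z y₀ ^ ε := by
      have := abs_sub_le_iff.1 h1
      linarith [this.1, this.2]
    have h4 : K * dist z y₀ ^ ε ≤ K * dist z x ^ ε + K * dist x y₀ ^ ε := by nlinarith
    simp only [hF]
    rw [dist_comm x z]
    linarith
  have hveq : ∀ x ∈ L, v x = u x := by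
    intro x hxL
    refine le_antisymm ?_ ?_
    · have : F x x = u x := by simp [hF, Real.zero_rpow hε.ne']
      exact this ▸ csInf_le (hbdd x) (Set.mem_image_of_mem _ hxL)
    · refine le_csInf (hne x) ?_
      rintro t ⟨z, hzL, rfl⟩
      have h1 := (abs_sub_le_iff.1 (hld x hxL z hzL)).1
      simp only [hF]
      linarith
  refine ⟨v, hveq, fun x y => ?_⟩
  have key : ∀ x y, v x ≤ v y + K * dist x y ^ ε := by
    intro x y
    have : ∀ t ∈ F y '' L, v x - K * dist x y ^ ε ≤ t := by
      rintro t ⟨z, hzL, rfl⟩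
      have h1 : v x ≤ F x z := csInf_le (hbdd x) (Set.mem_image_of_mem _ hzL)
      have h2 : dist x z ^ ε ≤ dist x y ^ ε + dist y z ^ ε := dist_rpow_tri hε hε1 x y z
      simp only [hF] at h1 ⊢
      nlinarith
    have := le_csInf (hne y) this
    linarith [this]
  have h1 := key x y
  have h2 := key y x
  rw [dist_comm y x] at h2
  rw [abs_sub_le_iff]
  constructor <;> linarith

theorem two_point {n : ℕ} [Nontrivial (EuclideanSpace ℝ (Fin n))] {s p : ℝ}
    (hs : 0 < s) (hp1 : 1 < p) (hε : 0 < s - (n:ℝ)/p)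
    {u g : EuclideanSpace ℝ (Fin n) → ℝ} (hum : Measurable u) (hg0 : ∀ x, 0 ≤ g x)
    (hgp : MemLp g (ENNReal.ofReal p) volume)
    {E : Set (EuclideanSpace ℝ (Fin n))} (hE : volume E = 0)
    (hH : ∀ x ∉ E, ∀ y ∉ E, |u x - u y| ≤ dist x y ^ s * (g x + g y))
    {x y : EuclideanSpace ℝ (Fin n)} (hx : IsLebesguePoint u x) (hy : IsLebesguePoint u y) :
    |u x - u y| ≤
      ((1 - (2:ℝ) ^ (-(s - (n:ℝ)/p)))⁻¹ * (2 * 2 ^ s * 2 ^ ((n:ℝ)/p) * (ballVol n) ^ (-(1/p)))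
          * (2 ^ (s - (n:ℝ)/p) + 1) + 2 * 4 ^ s * (ballVol n) ^ (-(1/p)))
        * dist x y ^ (s - (n:ℝ)/p) * (∫ z in ball x (2 * dist x y), g z ^ p) ^ (1/p) := by
  set ε := s - (n:ℝ)/p with hεdef
  set A := (1 - (2:ℝ) ^ (-ε))⁻¹ * (2 * 2 ^ s * 2 ^ ((n:ℝ)/p) * (ballVol n) ^ (-(1/p)))
    with hAdef
  rcases eq_or_lt_of_le (dist_nonneg (x := x) (y := y)) with h0 | hr
  · have hxy : x = y := dist_eq_zero.1 h0.symm
    subst hxy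
    simp [dist_self, Real.zero_rpow hε.ne']
  · set r := dist x y with hrdef
    have hu_loc := u_loc hs hp1.le hum hg0 hgp hE hH
    have hg_loc := g_loc hp1.le hgp
    set S := ball x (2*r) with hSdef
    set GS := (∫ z in S, g z ^ p) ^ (1/p) with hGSdef
    have hGS0 : 0 ≤ GS :=
      Real.rpow_nonneg (integral_nonneg fun z => Real.rpow_nonneg (hg0 z) p) _
    have hsubyx : ball y r ⊆ S := by
      refine ball_subset_ball' ?_
      rw [dist_comm y x, ← hrdef]
      linarith
    have T1 := chain_est hs hp1 hε hg0 hgp hE hH hu_loc hg_loc hx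
      (by linarith : (0:ℝ) < 2*r) (subset_refl S)
    have T2 := chain_est hs hp1 hε hg0 hgp hE hH hu_loc hg_loc hy hr hsubyx
    have T3 := pair_est hs hg0 hE hH (by linarith : (0:ℝ) < 2*r) (hu_loc x (2*r))
      (hg_loc x (2*r)) measurableSet_ball hsubyx (measure_ball_pos volume y hr)
    -- bound the averages of g in T3
    have hb1 := avg_bound hp1 hg0 hgp hsubyx (measure_ball_pos volume y hr)
      measure_ball_lt_top
    have hb2 := avg_bound hp1 hg0 hgp (subset_refl S) (measure_ball_pos volume x (by linarith))
      measure_ball_lt_top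
    have hm1 : (volume (ball y r)).toReal = r ^ n * ballVol n := mball y hr.le
    have hm2 : (volume S).toReal = (2*r) ^ n * ballVol n := mball x (by linarith)
    have hmpos1 : 0 < r ^ n * ballVol n := mul_pos (pow_pos hr n) (ballVol_pos n)
    have hmle : r ^ n * ballVol n ≤ (2*r) ^ n * ballVol n := by
      have := pow_le_pow_left₀ hr.le (by linarith : r ≤ 2*r) n
      nlinarith [ballVol_pos n]
    have hanti : ((2*r) ^ n * ballVol n) ^ (-(1/p)) ≤ (r ^ n * ballVol n) ^ (-(1/p)) :=
      Real.rpow_le_rpow_of_nonpos hmpos1 hmle (neg_nonpos.2 (by positivity))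
    have e1 : (volume (ball y r)).toReal⁻¹ * ∫ z in ball y r, g z
        ≤ (r ^ n * ballVol n) ^ (-(1/p)) * GS := by
      rw [← hm1]; exact hb1
    have e2 : (volume S).toReal⁻¹ * ∫ z in S, g z
        ≤ (r ^ n * ballVol n) ^ (-(1/p)) * GS := by
      refine hb2.trans ?_
      rw [hm2]
      exact mul_le_mul_of_nonneg_right hanti hGS0
    have T3' : |((volume (ball y r)).toReal⁻¹ * ∫ z in ball y r, u z)
        - (volume S).toReal⁻¹ * ∫ w in S, u w|
        ≤ (2*(2*r)) ^ s * (2 * ((r ^ n * ballVol n) ^ (-(1/p)) * GS)) := by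
      refine T3.trans ?_
      have hadd := add_le_add e1 e2
      refine (mul_le_mul_of_nonneg_left hadd (Real.rpow_nonneg (by positivity) s)).trans_eq ?_
      ring
    -- triangle inequality
    set aX := (volume S).toReal⁻¹ * ∫ z in S, u z with haX
    set aY := (volume (ball y r)).toReal⁻¹ * ∫ z in ball y r, u z with haY
    have tri : |u x - u y| ≤ |u x - aX| + |aY - aX| + |u y - aY| := by
      have t1 := abs_sub_le (u x) aX (u y)
      have t2 := abs_sub_le aX aY (u y)
      have t3 : |aX - aY| = |aY - aX| := abs_sub_comm _ _
      have t4 : |aY - u y| = |u y - aY| := abs_sub_comm _ _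
      linarith
    have total : |u x - u y| ≤ A * (2*r) ^ ε * GS
        + (2*(2*r)) ^ s * (2 * ((r ^ n * ballVol n) ^ (-(1/p)) * GS)) + A * r ^ ε * GS := by
      refine tri.trans ?_
      have hT1 : |u x - aX| ≤ A * (2*r) ^ ε * GS := T1
      have hT2 : |u y - aY| ≤ A * r ^ ε * GS := T2
      have hT3 : |aY - aX| ≤ (2*(2*r)) ^ s * (2 * ((r ^ n * ballVol n) ^ (-(1/p)) * GS)) := T3'
      linarith
    refine total.trans_eq ?_
    -- algebra
    have i1 : (2*r) ^ ε = 2 ^ ε * r ^ ε := Real.mul_rpow (by norm_num) hr.le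
    have i2 : (2*(2*r)) ^ s = 4 ^ s * r ^ s := by
      rw [show (2*(2*r)) = 4*r by ring]
      exact Real.mul_rpow (by norm_num) hr.le
    have i3 : (r ^ n * ballVol n) ^ (-(1/p))
        = r ^ (-((n:ℝ)/p)) * (ballVol n) ^ (-(1/p)) := by
      rw [Real.mul_rpow (by positivity) (ballVol_pos n).le]
      congr 1
      rw [← Real.rpow_natCast r n, ← Real.rpow_mul hr.le]
      congr 1; ring
    have i4 : r ^ s * r ^ (-((n:ℝ)/p)) = r ^ ε := by
      rw [← Real.rpow_add hr, hεdef]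
      congr 1; try ring
    rw [i1, i2, i3, ← i4]
    ring

/-- Morrey imbedding for Hajłasz–Sobolev functions: if `u` has an s-Hajłasz gradient
`g ∈ L^p(ℝⁿ)` with `p > n/s`, then `u` has an `(s − n/p)`-Hölder continuous
representative, and at Lebesgue points
`|u(x) − u(y)| ≤ C |x−y|^{s−n/p} (∫_{B(x,2|x−y|)} g^p)^{1/p}`. -/
theorem hajlasz_morrey_imbedding {n : ℕ} (hn : 1 ≤ n) (s p : ℝ)
    (hs : 0 < s) (hs1 : s ≤ 1) (hp : (n : ℝ) / s < p) :
    ∃ C : ℝ, 0 < C ∧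
    ∀ u g : EuclideanSpace ℝ (Fin n) → ℝ,
      Measurable u → (∀ x, 0 ≤ g x) → Measurable g →
      MemLp g (ENNReal.ofReal p) volume →
      (∃ E : Set (EuclideanSpace ℝ (Fin n)), volume E = 0 ∧
        ∀ x ∉ E, ∀ y ∉ E, |u x - u y| ≤ dist x y ^ s * (g x + g y)) →
      (∃ v : EuclideanSpace ℝ (Fin n) → ℝ, v =ᵐ[volume] u ∧
        ∀ x y, |v x - v y| ≤
          C * (eLpNorm g (ENNReal.ofReal p) volume).toReal * dist x y ^ (s - n / p)) ∧
      (∀ x y, IsLebesguePoint u x → IsLebesguePoint u y →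
        |u x - u y| ≤ C * dist x y ^ (s - n / p) *
          (∫ z in ball x (2 * dist x y), g z ^ p) ^ (1 / p)) := by
  haveI : Nontrivial (EuclideanSpace ℝ (Fin n)) := by
    have h : 0 < Module.finrank ℝ (EuclideanSpace ℝ (Fin n)) := by
      rw [finrank_euclideanSpace_fin]; omega
    exact Module.nontrivial_of_finrank_pos h
  have hn' : (1:ℝ) ≤ (n:ℝ) := by exact_mod_cast hn
  have hp1 : 1 < p := lt_of_le_of_lt ((one_le_div hs).2 (le_trans hs1 hn')) hp
  have hppos : 0 < p := one_pos.trans hp1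
  have hnp : (n:ℝ) < p * s := (div_lt_iff₀ hs).1 hp
  have hε : 0 < s - (n:ℝ)/p := by
    rw [sub_pos]
    rw [div_lt_iff₀ hppos]
    linarith
  have hε1 : s - (n:ℝ)/p ≤ 1 := by
    have h1 : 0 ≤ (n:ℝ)/p := by positivity
    linarith
  set C2 := (1 - (2:ℝ) ^ (-(s - (n:ℝ)/p)))⁻¹ *
      (2 * 2 ^ s * 2 ^ ((n:ℝ)/p) * (ballVol n) ^ (-(1/p))) * (2 ^ (s - (n:ℝ)/p) + 1)
      + 2 * 4 ^ s * (ballVol n) ^ (-(1/p)) with hC2def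
  have ht1 : (2:ℝ) ^ (-(s - (n:ℝ)/p)) < 1 :=
    Real.rpow_lt_one_of_one_lt_of_neg one_lt_two (by linarith)
  have hC2 : 0 ≤ C2 := by
    have h1 : (0:ℝ) ≤ (1 - (2:ℝ) ^ (-(s - (n:ℝ)/p)))⁻¹ := inv_nonneg.2 (by linarith)
    have h2 : (0:ℝ) ≤ 2 * 2 ^ s * 2 ^ ((n:ℝ)/p) * (ballVol n) ^ (-(1/p)) :=
      mul_nonneg (by positivity) (Real.rpow_nonneg (ballVol_pos n).le _)
    have h3 : (0:ℝ) ≤ 2 ^ (s - (n:ℝ)/p) + 1 := by positivity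
    have h4 : (0:ℝ) ≤ 2 * 4 ^ s * (ballVol n) ^ (-(1/p)) :=
      mul_nonneg (by positivity) (Real.rpow_nonneg (ballVol_pos n).le _)
    rw [hC2def]
    nlinarith [mul_nonneg (mul_nonneg h1 h2) h3]
  refine ⟨C2 + 1, by linarith, ?_⟩
  intro u g hum hg0 hgm hgp hHex
  obtain ⟨E, hE, hH⟩ := hHex
  have hu_loc := u_loc hs hp1.le hum hg0 hgp hE hH
  have hnorm0 : 0 ≤ (eLpNorm g (ENNReal.ofReal p) volume).toReal := ENNReal.toReal_nonneg
  -- the two-point estimate with the final constant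
  have htwo : ∀ x y : EuclideanSpace ℝ (Fin n), IsLebesguePoint u x → IsLebesguePoint u y →
      |u x - u y| ≤ (C2 + 1) * dist x y ^ (s - (n:ℝ)/p) *
        (∫ z in ball x (2 * dist x y), g z ^ p) ^ (1/p) := by
    intro x y hx hy
    refine (two_point hs hp1 hε hum hg0 hgp hE hH hx hy).trans ?_
    have hG0 : 0 ≤ (∫ z in ball x (2 * dist x y), g z ^ p) ^ (1/p) :=
      Real.rpow_nonneg (integral_nonneg fun z => Real.rpow_nonneg (hg0 z) p) _
    have hd0 : 0 ≤ dist x y ^ (s - (n:ℝ)/p) := Real.rpow_nonneg dist_nonneg _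
    refine mul_le_mul_of_nonneg_right (mul_le_mul_of_nonneg_right ?_ hd0) hG0
    rw [hC2def]; linarith
  constructor
  · -- Hölder representative
    set L := {x : EuclideanSpace ℝ (Fin n) | IsLebesguePoint u x} with hLdef
    have hloc : LocallyIntegrable u volume := fun x =>
      ⟨ball x 1, ball_mem_nhds x one_pos, hu_loc x 1⟩
    have hLae : ∀ᵐ x, x ∈ L := ae_lebesgue hloc
    have hLne : L.Nonempty := by
      rw [Set.nonempty_iff_ne_empty]
      intro hemp
      have : ∀ᵐ x : EuclideanSpace ℝ (Fin n), False := by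
        filter_upwards [hLae] with x hx
        rw [hemp] at hx; exact hx
      have h0 : volume (Set.univ : Set (EuclideanSpace ℝ (Fin n))) = 0 := by
        have := (ae_iff).1 this
        simpa using this
      have := measure_ball_pos volume (0 : EuclideanSpace ℝ (Fin n)) one_pos
      exact absurd (le_antisymm ((measure_mono (Set.subset_univ _)).trans h0.le) (by positivity))
        this.ne'
    set Kc := (C2 + 1) * (eLpNorm g (ENNReal.ofReal p) volume).toReal with hKcdef
    have hKc0 : 0 ≤ Kc := mul_nonneg (by linarith) hnorm0
    have hnormeq : (eLpNorm g (ENNReal.ofReal p) volume).toReal = (∫ z, g z ^ p) ^ (1/p) :=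
      norm_toReal_eq hppos hg0 hgm
    have hgp_int : Integrable (fun z => g z ^ p) volume := gp_integrable hppos hg0 hgp
    have hld : ∀ x ∈ L, ∀ y ∈ L, |u x - u y| ≤ Kc * dist x y ^ (s - (n:ℝ)/p) := by
      intro x hx y hy
      have hGle : (∫ z in ball x (2 * dist x y), g z ^ p) ^ (1/p)
          ≤ (eLpNorm g (ENNReal.ofReal p) volume).toReal := by
        rw [hnormeq]
        refine Real.rpow_le_rpow (integral_nonneg fun z => Real.rpow_nonneg (hg0 z) p)
          (setIntegral_le_integral hgp_int
            (Eventually.of_forall fun z => Real.rpow_nonneg (hg0 z) p)) (by positivity)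
      have hd0 : 0 ≤ dist x y ^ (s - (n:ℝ)/p) := Real.rpow_nonneg dist_nonneg _
      calc |u x - u y| ≤ (C2 + 1) * dist x y ^ (s - (n:ℝ)/p) *
            (∫ z in ball x (2 * dist x y), g z ^ p) ^ (1/p) := htwo x y hx hy
        _ ≤ (C2 + 1) * dist x y ^ (s - (n:ℝ)/p) *
            (eLpNorm g (ENNReal.ofReal p) volume).toReal := by
            refine mul_le_mul_of_nonneg_left hGle ?_
            exact mul_nonneg (by linarith) hd0
        _ = Kc * dist x y ^ (s - (n:ℝ)/p) := by rw [hKcdef]; try ring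
    obtain ⟨v, hveq, hvh⟩ := mcshane hε hε1 hKc0 hLne hld
    refine ⟨v, ?_, ?_⟩
    · filter_upwards [hLae] with x hx
      exact hveq x hx
    · intro x y
      refine (hvh x y).trans_eq ?_
      rw [hKcdef]; try ring
  · exact htwo
end
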